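/- Let V be a nonempty finite type, let w : V → (0, ∞) be a probability vector (Σ_{t ∈ V} w(t) = 1), and let C ⊆ V be a nonempty subset with total mass q = Σ_{t ∈ C} w(t). Let (U_t)_{t ∈ V} be independent real-valued random variables each distributed according to the standard Gumbel distribution, and sort the elements of V in decreasing order of log(w(t)) + U_t (this ordering is almost surely well defined). Let N be the rank (counting from 1) of the first element of C in this ordering, i.e., the number of elements examined until an element of C is reached. Then E[N] ≤ 1/q, and the inequality is strict whenever C ≠ V. -/

import Mathlib

/-!
With `r = exp m`, the Gumbel law with location `m` has CDF `F_r x = exp (-r e^{-x})`, so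
`log (w t) + U t` has CDF `F_{w t}`, and since `F_a F_b = F_{a + b}` the maximum `M` of the
perturbed log-weights over `C` has CDF `F_q`. An element `t ∉ C` precedes all of `C` iff its
perturbed log-weight exceeds `M`, which by independence has probability
`∫ F_q dF_{w t} = w t / (q + w t) < w t / q`, because
`F_q F_{w t}' = (w t / (q + w t)) F_{q + w t}'`.
Summing over `t ∉ C`, `E[N] < 1 + (1 - q) / q = 1 / q` unless `C` is everything.
-/

open MeasureTheory ProbabilityTheory
open scoped Classical

open scoped Finset in
lemma natCast_card_filter_mem_eq_sum_indicator {ι Ω : Type*} (s : Finset ι) (A : ι → Set Ω)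
    (ω : Ω) :
    (#{i ∈ s | ω ∈ A i} : ℝ) = ∑ i ∈ s, (A i).indicator 1 ω := by
  rw [Finset.natCast_card_filter]
  simp only [Set.indicator_apply, Pi.one_apply]

section RankBound

variable {ι : Type*} {s : Finset ι} {w : ι → ℝ} {q : ℝ}

lemma one_add_sum_div_eq_one_div (hq : 0 < q) (hsum : q + ∑ i ∈ s, w i = 1) :
    1 + ∑ i ∈ s, w i / q = 1 / q := by
  rw [← Finset.sum_div, show ∑ i ∈ s, w i = 1 - q by linarith]
  field_simp
  ring

lemma one_add_sum_div_add_le_one_div (hq : 0 < q) (hw : ∀ i ∈ s, 0 ≤ w i)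
    (hsum : q + ∑ i ∈ s, w i = 1) : 1 + ∑ i ∈ s, w i / (q + w i) ≤ 1 / q := by
  rw [← one_add_sum_div_eq_one_div hq hsum]
  gcongr 1 + ∑ i ∈ s, ?_ with i hi
  exact div_le_div_of_nonneg_left (hw i hi) hq (le_add_of_nonneg_right (hw i hi))

lemma one_add_sum_div_add_lt_one_div (hq : 0 < q) (hw : ∀ i ∈ s, 0 < w i) (hs : s.Nonempty)
    (hsum : q + ∑ i ∈ s, w i = 1) : 1 + ∑ i ∈ s, w i / (q + w i) < 1 / q := by
  rw [← one_add_sum_div_eq_one_div hq hsum]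
  exact (add_lt_add_iff_left 1).mpr (Finset.sum_lt_sum_of_nonempty hs fun i hi =>
    div_lt_div_of_pos_left (hw i hi) hq (lt_add_of_pos_right q (hw i hi)))

end RankBound

namespace ProbabilityTheory

open Real Set Filter Topology
open scoped Finset

-- The CDF of the Gumbel law with location `log r`.
noncomputable def gumbelCDFReal (r x : ℝ) : ℝ := exp (-(r * exp (-x)))

noncomputable def gumbelPDFReal (r x : ℝ) : ℝ := r * exp (-x) * gumbelCDFReal r x

lemma gumbelCDFReal_mul_gumbelCDFReal (q s x : ℝ) :
    gumbelCDFReal q x * gumbelCDFReal s x = gumbelCDFReal (q + s) x := by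
  rw [gumbelCDFReal, gumbelCDFReal, gumbelCDFReal, ← exp_add]
  ring_nf

lemma gumbelCDFReal_nonneg (r x : ℝ) : 0 ≤ gumbelCDFReal r x := (exp_pos _).le

lemma prod_gumbelCDFReal {ι : Type*} (s : Finset ι) (r : ι → ℝ) (x : ℝ) :
    ∏ i ∈ s, gumbelCDFReal (r i) x = gumbelCDFReal (∑ i ∈ s, r i) x := by
  simp only [gumbelCDFReal, ← exp_sum, Finset.sum_mul, Finset.sum_neg_distrib]

lemma gumbelCDFReal_one_sub_log {r : ℝ} (hr : 0 < r) (x : ℝ) :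
    gumbelCDFReal 1 (x - log r) = gumbelCDFReal r x := by
  rw [gumbelCDFReal, gumbelCDFReal, neg_sub, exp_sub, exp_log hr, div_eq_mul_inv, ← exp_neg,
    one_mul]

lemma gumbelCDFReal_mul_gumbelPDFReal {q s : ℝ} (h : q + s ≠ 0) (x : ℝ) :
    gumbelCDFReal q x * gumbelPDFReal s x = s / (q + s) * gumbelPDFReal (q + s) x := by
  rw [gumbelPDFReal, gumbelPDFReal, ← gumbelCDFReal_mul_gumbelCDFReal]
  field_simp

lemma gumbelPDFReal_nonneg {r : ℝ} (hr : 0 ≤ r) (x : ℝ) : 0 ≤ gumbelPDFReal r x := by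
  unfold gumbelPDFReal gumbelCDFReal; positivity

@[fun_prop]
lemma continuous_gumbelCDFReal (r : ℝ) : Continuous (gumbelCDFReal r) := by
  unfold gumbelCDFReal; fun_prop

@[fun_prop]
lemma continuous_gumbelPDFReal (r : ℝ) : Continuous (gumbelPDFReal r) := by
  unfold gumbelPDFReal; fun_prop

lemma hasDerivAt_gumbelCDFReal (r x : ℝ) :
    HasDerivAt (gumbelCDFReal r) (gumbelPDFReal r x) x := by
  have h : HasDerivAt (fun y => exp (-(r * exp (-y))))
      (exp (-(r * exp (-x))) * -(r * (exp (-x) * -1))) x :=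
    (((hasDerivAt_neg x).exp.const_mul r).neg).exp
  exact h.congr_deriv (by rw [gumbelPDFReal, gumbelCDFReal]; ring)

lemma tendsto_gumbelCDFReal_atBot {r : ℝ} (hr : 0 < r) :
    Tendsto (gumbelCDFReal r) atBot (𝓝 0) :=
  tendsto_exp_atBot.comp <| tendsto_neg_atTop_atBot.comp <|
    (tendsto_exp_atTop.comp tendsto_neg_atBot_atTop).const_mul_atTop hr

lemma tendsto_gumbelCDFReal_atTop (r : ℝ) : Tendsto (gumbelCDFReal r) atTop (𝓝 1) := by
  have h : Tendsto (fun x => -(r * exp (-x))) atTop (𝓝 (-(r * 0))) :=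
    ((tendsto_exp_atBot.comp tendsto_neg_atTop_atBot).const_mul r).neg
  have h' := (continuous_exp.tendsto _).comp h
  rwa [mul_zero, neg_zero, exp_zero] at h'

lemma gumbelPDFReal_le {r : ℝ} (hr : 0 < r) (x : ℝ) : gumbelPDFReal r x ≤ 2 / r * exp x := by
  set t := r * exp (-x) with ht
  have ht0 : 0 < t := by positivity
  have hexp := quadratic_le_exp_of_nonneg ht0.le
  have hx : exp x = r / t := by rw [ht, exp_neg]; field_simp
  rw [gumbelPDFReal, gumbelCDFReal, ← ht, hx, exp_neg, div_mul_div_cancel₀ hr.ne',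
    ← div_eq_mul_inv, div_le_div_iff₀ (exp_pos t) ht0]
  nlinarith

lemma integrable_gumbelPDFReal {r : ℝ} (hr : 0 < r) : Integrable (gumbelPDFReal r) := by
  rw [← integrableOn_univ, ← Iic_union_Ioi (a := 0)]
  refine IntegrableOn.union ?_ ?_
  · refine ((integrableOn_exp_Iic 0).const_mul (2 / r)).mono'
      (continuous_gumbelPDFReal r).aestronglyMeasurable (ae_of_all _ fun x => ?_)
    rw [norm_of_nonneg (gumbelPDFReal_nonneg hr.le x)]
    exact gumbelPDFReal_le hr x
  · exact integrableOn_Ioi_deriv_of_nonneg' (fun x _ => hasDerivAt_gumbelCDFReal r x)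
      (fun x _ => gumbelPDFReal_nonneg hr.le x) (tendsto_gumbelCDFReal_atTop r)

lemma integral_Iic_gumbelPDFReal {r : ℝ} (hr : 0 < r) (a : ℝ) :
    ∫ x in Iic a, gumbelPDFReal r x = gumbelCDFReal r a := by
  simpa using integral_Iic_of_hasDerivAt_of_tendsto' (fun x _ => hasDerivAt_gumbelCDFReal r x)
    (integrable_gumbelPDFReal hr).integrableOn (tendsto_gumbelCDFReal_atBot hr)

lemma integral_gumbelPDFReal {r : ℝ} (hr : 0 < r) : ∫ x, gumbelPDFReal r x = 1 := by
  simpa using integral_of_hasDerivAt_of_tendsto (hasDerivAt_gumbelCDFReal r)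
    (integrable_gumbelPDFReal hr) (tendsto_gumbelCDFReal_atBot hr) (tendsto_gumbelCDFReal_atTop r)

noncomputable def gumbelMeasure (r : ℝ) : Measure ℝ :=
  volume.withDensity fun x => ENNReal.ofReal (gumbelPDFReal r x)

instance (r : ℝ) : SFinite (gumbelMeasure r) := by
  unfold gumbelMeasure; infer_instance

instance (r : ℝ) : NullSingletonClass (gumbelMeasure r) := by
  unfold gumbelMeasure; infer_instance

lemma gumbelMeasure_Iic {r : ℝ} (hr : 0 < r) (a : ℝ) :
    gumbelMeasure r (Iic a) = ENNReal.ofReal (gumbelCDFReal r a) := by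
  rw [gumbelMeasure, withDensity_apply _ measurableSet_Iic, ← integral_Iic_gumbelPDFReal hr,
    ofReal_integral_eq_lintegral_ofReal (integrable_gumbelPDFReal hr).integrableOn
      (ae_of_all _ (gumbelPDFReal_nonneg hr.le))]

lemma isProbabilityMeasure_gumbelMeasure {r : ℝ} (hr : 0 < r) :
    IsProbabilityMeasure (gumbelMeasure r) := by
  constructor
  rw [gumbelMeasure, withDensity_apply _ MeasurableSet.univ, Measure.restrict_univ,
    ← ofReal_integral_eq_lintegral_ofReal (integrable_gumbelPDFReal hr)
      (ae_of_all _ (gumbelPDFReal_nonneg hr.le)), integral_gumbelPDFReal hr, ENNReal.ofReal_one]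

lemma lintegral_gumbelCDFReal_gumbelMeasure {q s : ℝ} (hq : 0 < q) (hs : 0 < s) :
    ∫⁻ y, ENNReal.ofReal (gumbelCDFReal q y) ∂gumbelMeasure s =
      ENNReal.ofReal (s / (q + s)) := by
  have hqs : 0 < q + s := by positivity
  rw [gumbelMeasure, lintegral_withDensity_eq_lintegral_mul _
      (continuous_gumbelPDFReal s).measurable.ennreal_ofReal
      (continuous_gumbelCDFReal q).measurable.ennreal_ofReal]
  simp only [Pi.mul_apply, ← ENNReal.ofReal_mul (gumbelPDFReal_nonneg hs.le _),
    mul_comm (gumbelPDFReal s _), gumbelCDFReal_mul_gumbelPDFReal hqs.ne']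
  rw [← ofReal_integral_eq_lintegral_ofReal ((integrable_gumbelPDFReal hqs).const_mul _)
      (ae_of_all _ fun x => mul_nonneg (by positivity) (gumbelPDFReal_nonneg hqs.le x)),
    integral_const_mul, integral_gumbelPDFReal hqs, mul_one]

variable {Ω : Type*} [MeasurableSpace Ω] {μ : Measure Ω}

lemma map_eq_gumbelMeasure [IsProbabilityMeasure μ] {X : Ω → ℝ} (hX : Measurable X) {r : ℝ}
    (hr : 0 < r) (hcdf : ∀ x, μ {ω | X ω ≤ x} = ENNReal.ofReal (gumbelCDFReal r x)) :
    μ.map X = gumbelMeasure r := by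
  have := isProbabilityMeasure_gumbelMeasure hr
  refine Measure.ext_of_Iic _ _ fun a => ?_
  rw [Measure.map_apply hX measurableSet_Iic, gumbelMeasure_Iic hr]
  exact hcdf a

lemma measure_lt_of_gumbel [IsProbabilityMeasure μ] {X Y : Ω → ℝ} (hX : Measurable X)
    (hY : Measurable Y) (hXY : IndepFun X Y μ) {q s : ℝ} (hq : 0 < q) (hs : 0 < s)
    (hcdfX : ∀ x, μ {ω | X ω ≤ x} = ENNReal.ofReal (gumbelCDFReal q x))
    (hcdfY : ∀ x, μ {ω | Y ω ≤ x} = ENNReal.ofReal (gumbelCDFReal s x)) :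
    μ {ω | X ω < Y ω} = ENNReal.ofReal (s / (q + s)) := by
  have hlt : MeasurableSet {p : ℝ × ℝ | p.1 < p.2} :=
    measurableSet_lt measurable_fst measurable_snd
  have hlaw : μ.map (fun ω => (X ω, Y ω)) = (gumbelMeasure q).prod (gumbelMeasure s) := by
    rw [(indepFun_iff_map_prod_eq_prod_map_map hX.aemeasurable hY.aemeasurable).mp hXY,
      map_eq_gumbelMeasure hX hq hcdfX, map_eq_gumbelMeasure hY hs hcdfY]
  change μ ((fun ω => (X ω, Y ω)) ⁻¹' {p | p.1 < p.2}) = _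
  rw [← Measure.map_apply (hX.prodMk hY) hlt, hlaw, Measure.prod_apply_symm hlt,
    ← lintegral_gumbelCDFReal_gumbelMeasure hq hs]
  congr with y
  rw [← gumbelMeasure_Iic hq, ← measure_congr Iio_ae_eq_Iic]
  rfl

lemma measure_log_add_le_of_gumbel {U : Ω → ℝ}
    (hU : ∀ x, μ {ω | U ω ≤ x} = ENNReal.ofReal (gumbelCDFReal 1 x)) {r : ℝ} (hr : 0 < r)
    (x : ℝ) : μ {ω | log r + U ω ≤ x} = ENNReal.ofReal (gumbelCDFReal r x) := by
  simp_rw [← le_sub_iff_add_le', hU, gumbelCDFReal_one_sub_log hr]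

variable {ι : Type*}

lemma iIndepFun.measure_finsetSup'_le {β : Type*} [SemilatticeSup β] [TopologicalSpace β]
    [MeasurableSpace β] [OpensMeasurableSpace β] [ClosedIicTopology β] {X : ι → Ω → β}
    (hX : iIndepFun X μ) {s : Finset ι} (hs : s.Nonempty) (x : β) :
    μ {ω | s.sup' hs X ω ≤ x} = ∏ i ∈ s, μ {ω | X i ω ≤ x} := by
  have hset : {ω | s.sup' hs X ω ≤ x} = ⋂ i ∈ s, {ω | X i ω ≤ x} := by
    ext ω
    simp [Finset.sup'_apply]
  rw [hset]
  exact hX.meas_biInter fun i _ => ⟨Iic x, measurableSet_Iic, rfl⟩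

lemma iIndepFun.indepFun_finsetSup'_of_notMem {β : Type*} [SemilatticeSup β]
    [MeasurableSpace β] [MeasurableSup₂ β] {X : ι → Ω → β} (hX : iIndepFun X μ)
    (hXm : ∀ i, Measurable (X i)) {s : Finset ι} (hs : s.Nonempty) {i : ι} (hi : i ∉ s) :
    IndepFun (s.sup' hs X) (X i) μ := by
  have h_left : s.sup' hs X = (fun p : s → β => s.attach.sup' hs.attach p) ∘
      fun ω (j : s) => X j ω := by
    ext ω
    rw [Function.comp_apply, Finset.sup'_apply, ← WithBot.coe_eq_coe, Finset.coe_sup',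
      Finset.coe_sup']
    exact (Finset.sup_attach s _).symm
  have h_meas_left : Measurable fun p : s → β => s.attach.sup' hs.attach p := by
    convert Finset.measurable_sup' hs.attach fun j _ =>
      measurable_pi_apply (X := fun _ : s => β) j
    rw [Finset.sup'_apply]
  rw [h_left]
  exact (hX.indepFun_finset s {i} (Finset.disjoint_singleton_right.mpr hi) hXm).comp
    h_meas_left (measurable_pi_apply (X := fun _ : ({i} : Finset ι) => β)
      ⟨i, Finset.mem_singleton_self i⟩)

lemma iIndepFun.measure_finsetSup'_le_of_gumbel {X : ι → Ω → ℝ} (hX : iIndepFun X μ)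
    {r : ι → ℝ}
    (hcdf : ∀ i x, μ {ω | X i ω ≤ x} = ENNReal.ofReal (gumbelCDFReal (r i) x))
    {s : Finset ι} (hs : s.Nonempty) (x : ℝ) :
    μ {ω | s.sup' hs X ω ≤ x} = ENNReal.ofReal (gumbelCDFReal (∑ i ∈ s, r i) x) := by
  rw [hX.measure_finsetSup'_le hs, Finset.prod_congr rfl fun i _ => hcdf i x,
    ← ENNReal.ofReal_prod_of_nonneg fun i _ => gumbelCDFReal_nonneg _ _, prod_gumbelCDFReal]

lemma iIndepFun.measureReal_finsetSup'_lt_of_gumbel [IsProbabilityMeasure μ]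
    {X : ι → Ω → ℝ} (hX : iIndepFun X μ) (hXm : ∀ i, Measurable (X i)) {r : ι → ℝ}
    (hr : ∀ i, 0 < r i)
    (hcdf : ∀ i x, μ {ω | X i ω ≤ x} = ENNReal.ofReal (gumbelCDFReal (r i) x))
    {s : Finset ι} (hs : s.Nonempty) {t : ι} (ht : t ∉ s) :
    μ.real {ω | s.sup' hs X ω < X t ω} = r t / (∑ i ∈ s, r i + r t) := by
  have hq : 0 < ∑ i ∈ s, r i := Finset.sum_pos (fun i _ => hr i) hs
  rw [measureReal_def,
    measure_lt_of_gumbel (Finset.measurable_sup' hs fun i _ => hXm i) (hXm t)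
      (hX.indepFun_finsetSup'_of_notMem hXm hs ht) hq (hr t)
      (hX.measure_finsetSup'_le_of_gumbel hcdf hs) (hcdf t),
    ENNReal.toReal_ofReal (div_pos (hr t) (add_pos hq (hr t))).le]

lemma integrable_card_filter_mem [IsFiniteMeasure μ] (s : Finset ι) {A : ι → Set Ω}
    (hA : ∀ i ∈ s, MeasurableSet (A i)) :
    Integrable (fun ω => (#{i ∈ s | ω ∈ A i} : ℝ)) μ := by
  simp_rw [natCast_card_filter_mem_eq_sum_indicator]
  exact integrable_finsetSum _ fun i hi => (integrable_const 1).indicator (hA i hi)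

lemma integral_card_filter_mem [IsFiniteMeasure μ] (s : Finset ι) {A : ι → Set Ω}
    (hA : ∀ i ∈ s, MeasurableSet (A i)) :
    ∫ ω, (#{i ∈ s | ω ∈ A i} : ℝ) ∂μ = ∑ i ∈ s, μ.real (A i) := by
  simp_rw [natCast_card_filter_mem_eq_sum_indicator]
  rw [integral_finsetSum _ fun i hi => (integrable_const 1).indicator (hA i hi)]
  exact Finset.sum_congr rfl fun i hi => integral_indicator_one (hA i hi)

end ProbabilityTheory

theorem gumbel_max_expected_rank_general
    {V : Type*} [Fintype V]
    {Ω : Type*} [MeasurableSpace Ω] (μ : Measure Ω) [IsProbabilityMeasure μ]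
    -- `w` is a probability vector with positive entries
    (w : V → ℝ) (hw : ∀ t : V, 0 < w t) (hw_sum : ∑ t : V, w t = 1)
    (C : Finset V) (hC : C.Nonempty)
    (U : V → Ω → ℝ)
    (hUmeas : ∀ t : V, Measurable (U t))
    -- the `U t` are independent ...
    (hindep : iIndepFun U μ)
    -- ... and each is standard Gumbel distributed (CDF `exp (−exp (−x))`)
    (hgumbel : ∀ (t : V) (x : ℝ),
      μ {ω | U t ω ≤ x} = ENNReal.ofReal (Real.exp (-Real.exp (-x))))
    -- `N ω` is the rank (counting from 1) of the first element of `C` in the decreasing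
    -- ordering of the perturbed log-weights
    (N : Ω → ℕ)
    (hN : ∀ ω : Ω, N ω = 1 + (Finset.univ.filter (fun t : V => t ∉ C ∧
      ∀ c ∈ C, Real.log (w c) + U c ω < Real.log (w t) + U t ω)).card) :
    (∫ ω, (N ω : ℝ) ∂μ) ≤ 1 / (∑ t ∈ C, w t) ∧
    (C ≠ Finset.univ → (∫ ω, (N ω : ℝ) ∂μ) < 1 / (∑ t ∈ C, w t)) := by
  set Z : V → Ω → ℝ := fun t ω => Real.log (w t) + U t ω
  have hZm : ∀ t, Measurable (Z t) := fun t => (hUmeas t).const_add _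
  have hZ : iIndepFun Z μ := hindep.comp _ fun t => measurable_const_add (Real.log (w t))
  have hZcdf : ∀ t x, μ {ω | Z t ω ≤ x} = ENNReal.ofReal (gumbelCDFReal (w t) x) :=
    fun t => measure_log_add_le_of_gumbel (fun x => by rw [hgumbel, gumbelCDFReal, one_mul]) (hw t)
  set M := C.sup' hC Z
  have hA : ∀ t ∈ Cᶜ, MeasurableSet {ω | M ω < Z t ω} := fun t _ =>
    measurableSet_lt (Finset.measurable_sup' hC fun t _ => hZm t) (hZm t)
  have hrank : ∀ ω, (N ω : ℝ) = 1 + (Cᶜ.filter fun t => ω ∈ {ω | M ω < Z t ω}).card :=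
    fun ω => by
      rw [hN]
      push_cast
      congr 3
      ext t
      simp [M, Z, Finset.sup'_lt_iff]
  have hEN : ∫ ω, (N ω : ℝ) ∂μ = 1 + ∑ t ∈ Cᶜ, w t / (∑ c ∈ C, w c + w t) := by
    rw [integral_congr_ae (ae_of_all _ hrank), integral_add (integrable_const _)
      (integrable_card_filter_mem _ hA), integral_const, probReal_univ, one_smul,
      integral_card_filter_mem _ hA]
    exact congrArg _ (Finset.sum_congr rfl fun t ht =>
      hZ.measureReal_finsetSup'_lt_of_gumbel hZm hw hZcdf hC (Finset.mem_compl.mp ht))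
  have hq : 0 < ∑ t ∈ C, w t := Finset.sum_pos (fun t _ => hw t) hC
  have hsum : ∑ t ∈ C, w t + ∑ t ∈ Cᶜ, w t = 1 := by rw [Finset.sum_add_sum_compl, hw_sum]
  rw [hEN]
  exact ⟨one_add_sum_div_add_le_one_div hq (fun t _ => (hw t).le) hsum,
    fun hne => one_add_sum_div_add_lt_one_div hq (fun t _ => hw t)
      (Finset.nonempty_iff_ne_empty.mpr (by rwa [Ne, Finset.compl_eq_empty_iff])) hsum⟩

/-- sorting the tokens in decreasing order of `log (w t) + U t` with
`(U_t)` i.i.d. standard Gumbel, the expected rank `N` of the first element of the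
nonempty subset `C` (the number of elements examined until an element of `C` is reached)
satisfies `E[N] ≤ 1/q`, where `q = Σ_{t ∈ C} w t`, with strict inequality when `C ≠ V`.
(The rank of the first element of `C` is `1` plus the number of elements whose perturbed
log-weight strictly exceeds that of every element of `C`.) -/
theorem gumbel_max_expected_rank
    {V : Type*} [Fintype V] [Nonempty V]
    {Ω : Type*} [MeasurableSpace Ω] (μ : Measure Ω) [IsProbabilityMeasure μ]
    -- `w` is a probability vector with positive entries
    (w : V → ℝ) (hw : ∀ t : V, 0 < w t) (hw_sum : ∑ t : V, w t = 1)
    (C : Finset V) (hC : C.Nonempty)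
    (U : V → Ω → ℝ)
    (hUmeas : ∀ t : V, Measurable (U t))
    -- the `U t` are independent ...
    (hindep : iIndepFun U μ)
    -- ... and each is standard Gumbel distributed (CDF `exp (−exp (−x))`)
    (hgumbel : ∀ (t : V) (x : ℝ),
      μ {ω | U t ω ≤ x} = ENNReal.ofReal (Real.exp (-Real.exp (-x))))
    -- `N ω` is the rank (counting from 1) of the first element of `C` in the decreasing
    -- ordering of the perturbed log-weights
    (N : Ω → ℕ)
    (hN : ∀ ω : Ω, N ω = 1 + (Finset.univ.filter (fun t : V => t ∉ C ∧
      ∀ c ∈ C, Real.log (w c) + U c ω < Real.log (w t) + U t ω)).card) :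
    (∫ ω, (N ω : ℝ) ∂μ) ≤ 1 / (∑ t ∈ C, w t) ∧
    (C ≠ Finset.univ → (∫ ω, (N ω : ℝ) ∂μ) < 1 / (∑ t ∈ C, w t)) :=
  gumbel_max_expected_rank_general μ w hw hw_sum C hC U hUmeas hindep hgumbel N hN
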